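/- Let Γ be a finite directed graph, let w be a directed path in Γ, and let L = ↑{(w,w)} be the closed inverse subsemigroup of finite chain type with minimal element (w,w). If L has finite index in S(Γ), then [S(Γ):L] = Σ_{v ∈ V(w)} N^Γ_{v,w}, the sum over all vertices v lying on w of the number of directed paths in Γ with initial vertex v whose first edge is not an edge of w. -/

import Mathlib

/-- A (finite) directed graph: vertices, edges, and source/target maps. -/
structure DGraph where
  V : Type
  E : Type
  src : E → V
  tgt : E → V

namespace DGraph

/-- The vertex reached after traversing a list of edges from a vertex. -/
def walkEnd (G : DGraph) : G.V → List G.E → G.V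
  | v, [] => v
  | _, e :: l => walkEnd G (G.tgt e) l

/-- The list of edges forms a directed walk starting at the given vertex. -/
def IsWalk (G : DGraph) : G.V → List G.E → Prop
  | _, [] => True
  | v, e :: l => G.src e = v ∧ IsWalk G (G.tgt e) l

variable (G : DGraph)

@[simp] theorem walkEnd_nil (v : G.V) : G.walkEnd v [] = v := rfl
@[simp] theorem walkEnd_cons (v : G.V) (e : G.E) (l : List G.E) :
    G.walkEnd v (e :: l) = G.walkEnd (G.tgt e) l := rfl
@[simp] theorem isWalk_nil (v : G.V) : G.IsWalk v [] := trivial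
@[simp] theorem isWalk_cons (v : G.V) (e : G.E) (l : List G.E) :
    G.IsWalk v (e :: l) ↔ G.src e = v ∧ G.IsWalk (G.tgt e) l := Iff.rfl

theorem isWalk_append (v : G.V) (l1 l2 : List G.E) :
    G.IsWalk v (l1 ++ l2) ↔ G.IsWalk v l1 ∧ G.IsWalk (G.walkEnd v l1) l2 := by
  induction l1 generalizing v with
  | nil => simp [IsWalk, walkEnd]
  | cons e l ih => simp [IsWalk, walkEnd, ih, and_assoc]

/-- A directed path in `G`: an initial vertex together with a compatible
list of edges, traversed in order (empty paths are allowed). -/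
structure DPath (G : DGraph) where
  first : G.V
  edges : List G.E
  wf : G.IsWalk first edges

namespace DPath

variable {G}

/-- The terminal vertex of a directed path. -/
def last (p : G.DPath) : G.V := G.walkEnd p.first p.edges

/-- The list of vertices lying on a directed path. -/
def vertexList (p : G.DPath) : List G.V := p.first :: p.edges.map G.tgt

/-- `q` is a suffix (terminal segment) of `p`: `p = l ⬝ q` for some edge list `l`. -/
def IsSuffixOf (q p : G.DPath) : Prop :=
  ∃ l : List G.E, p.edges = l ++ q.edges ∧ q.first = G.walkEnd p.first l

end DPath

theorem isWalk_chopAppend {u v w : G.DPath} (hs : v.IsSuffixOf u) (hvw : v.first = w.first) :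
    G.IsWalk u.first (u.edges.take (u.edges.length - v.edges.length) ++ w.edges) := by
  obtain ⟨l, hl, hfst⟩ := hs
  rw [hl]
  have hlen : (l ++ v.edges).length - v.edges.length = l.length := by simp
  rw [hlen, List.take_left, G.isWalk_append]
  have hu := u.wf
  rw [hl, G.isWalk_append] at hu
  refine ⟨hu.1, ?_⟩
  rw [← hfst, hvw]
  exact w.wf

theorem isWalk_concat {p q : G.DPath} (h : q.first = p.last) :
    G.IsWalk p.first (p.edges ++ q.edges) := by
  rw [G.isWalk_append]
  refine ⟨p.wf, ?_⟩
  show G.IsWalk p.last q.edges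
  rw [← h]
  exact q.wf

/-- Concatenation of composable directed paths. -/
def concatPath (p q : G.DPath) (h : q.first = p.last) : G.DPath :=
  ⟨p.first, p.edges ++ q.edges, G.isWalk_concat h⟩

theorem isWalk_replicate (a : G.E) (h : G.tgt a = G.src a) (m : ℕ) :
    G.IsWalk (G.src a) (List.replicate m a) := by
  induction m with
  | zero => trivial
  | succ n ih => rw [List.replicate_succ, G.isWalk_cons]; exact ⟨rfl, by rw [h]; exact ih⟩

/-- The path traversing a loop `a` exactly `m` times. -/
def loopPow (a : G.E) (h : G.tgt a = G.src a) (m : ℕ) : G.DPath :=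
  ⟨G.src a, List.replicate m a, G.isWalk_replicate a h m⟩

/-- `p` is a nonempty directed circuit. -/
def IsCircuit (p : G.DPath) : Prop := p.edges ≠ [] ∧ p.last = p.first

/-- `p` and `d` share no nontrivial common prefix (initial segment). -/
def NoCommonPrefix (p d : G.DPath) : Prop :=
  ∀ l : List G.E, l ≠ [] → l <+: p.edges → ¬ l <+: d.edges

end DGraph

/-- The underlying set of the graph inverse semigroup `S(Γ)`: pairs of directed
paths with the same initial vertex, together with a zero element. -/
inductive GIS (G : DGraph) where
  | zero : GIS G
  | pair (a b : G.DPath) (h : a.first = b.first) : GIS G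

namespace GIS

open scoped Classical in
/-- The multiplication of the graph inverse semigroup:
`(t,u)(v,w) = (t,pw)` if `u = pv`, `(pt,w)` if `v = pu`, and `0` otherwise. -/
noncomputable def mul {G : DGraph} : GIS G → GIS G → GIS G
  | .zero, _ => .zero
  | .pair _ _ _, .zero => .zero
  | .pair t u h1, .pair v w h2 =>
    if hs : v.IsSuffixOf u then
      .pair t ⟨t.first, u.edges.take (u.edges.length - v.edges.length) ++ w.edges,
        by rw [h1]; exact G.isWalk_chopAppend hs h2⟩ rfl
    else if hs' : u.IsSuffixOf v then
      .pair ⟨v.first, v.edges.take (v.edges.length - u.edges.length) ++ t.edges,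
        G.isWalk_chopAppend hs' h1.symm⟩ w h2
    else .zero

noncomputable instance {G : DGraph} : Mul (GIS G) := ⟨GIS.mul⟩

/-- The inverse: `(v,w)⁻¹ = (w,v)` and `0⁻¹ = 0`. -/
def inv {G : DGraph} : GIS G → GIS G
  | .zero => .zero
  | .pair a b h => .pair b a h.symm

/-- The natural partial order: `x ≤ y` iff `x = e * y` for some idempotent `e`. -/
def le {G : DGraph} (x y : GIS G) : Prop := ∃ e : GIS G, e * e = e ∧ x = e * y

end GIS

/-- `L` is a closed inverse subsemigroup of `S(Γ)`: a nonempty subset closed under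
multiplication, inverses, and upward closed in the natural partial order. -/
def IsCISS (G : DGraph) (L : Set (GIS G)) : Prop :=
  L.Nonempty ∧ (∀ a ∈ L, ∀ b ∈ L, a * b ∈ L) ∧ (∀ a ∈ L, a.inv ∈ L) ∧
    (∀ a ∈ L, ∀ s : GIS G, GIS.le a s → s ∈ L)

/-- The closed inverse subsemigroup `↑{(u,u)}` of (finite) chain type:
all `(q,q)` with `q` a suffix of `u`. -/
def chainSet (G : DGraph) (u : G.DPath) : Set (GIS G) :=
  {x | ∃ q : G.DPath, q.IsSuffixOf u ∧ x = GIS.pair q q rfl}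

/-- The edge list of the `r`-th power of the path `p`. -/
def powEdges {G : DGraph} (p : G.DPath) (r : ℕ) : List G.E :=
  (List.replicate r p.edges).flatten

/-- The closed inverse subsemigroup of cycle type
`L_{p,d} = {(v p^r d, v p^s d) : r,s ≥ 0, v a suffix of p} ∪ {(q,q) : q a suffix of d}`. -/
def cycleSet (G : DGraph) (p d : G.DPath) : Set (GIS G) :=
  {x | (∃ (r s : ℕ) (v a b : G.DPath) (h : a.first = b.first),
          v.IsSuffixOf p ∧ x = GIS.pair a b h ∧
          a.first = v.first ∧ a.edges = v.edges ++ powEdges p r ++ d.edges ∧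
          b.first = v.first ∧ b.edges = v.edges ++ powEdges p s ++ d.edges) ∨
       (∃ q : G.DPath, q.IsSuffixOf d ∧ x = GIS.pair q q rfl)}

/-- `L` is a chain of idempotents: all elements are idempotent and any two are
comparable in the natural partial order. -/
def IsChainOfIdem (G : DGraph) (L : Set (GIS G)) : Prop :=
  (∀ x ∈ L, x * x = x) ∧ ∀ x ∈ L, ∀ y ∈ L, GIS.le x y ∨ GIS.le y x

/-- The set of right cosets `↑(Lt)` (for `t` with `t t⁻¹ ∈ L`) of a closed inverse
subsemigroup `L`. -/
def cosets (G : DGraph) (L : Set (GIS G)) : Set (Set (GIS G)) :=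
  {C | ∃ t : GIS G, t * t.inv ∈ L ∧ C = {s | ∃ x ∈ L, GIS.le (x * t) s}}

/-- `H` and `K` are conjugate: for some `s`, `s⁻¹Hs ⊆ K` and `sKs⁻¹ ⊆ H`. -/
def Conjugate (G : DGraph) (H K : Set (GIS G)) : Prop :=
  ∃ s : GIS G, (∀ h ∈ H, s.inv * h * s ∈ K) ∧ (∀ k ∈ K, s * k * s.inv ∈ H)

/-- The set of directed paths with initial vertex `v` whose first edge (if any)
is not an edge of `w`. -/
def Npaths (G : DGraph) (v : G.V) (w : G.DPath) : Set G.DPath :=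
  {t | t.first = v ∧ ∀ e, t.edges.head? = some e → e ∉ w.edges}

/-! The cosets of `L = ↑{(w, w)}` are the up-sets `↑{(w, c)}`, one for each path `c` starting at
the initial vertex of `w`: if `w = l a`, the coset `↑(L (a, b))` is `↑{(w, l b)}`. Finite index
thus means finitely many such paths, so `w` visits no vertex twice (a repeated vertex would give a
circuit that can be pumped). Each path `c` from the start of `w` then splits uniquely at its
longest common prefix with `w`: it follows `w` to some vertex `v` of `w` and continues along a path
from `v` whose first edge is not an edge of `w`. -/

theorem List.eq_of_take_append_eq_take_append {α : Type*} {L t t' : List α} {i j : ℕ}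
    (hi : i ≤ L.length) (hj : j ≤ L.length)
    (ht : ∀ e, t.head? = some e → e ∉ L) (ht' : ∀ e, t'.head? = some e → e ∉ L)
    (h : L.take i ++ t = L.take j ++ t') : i = j := by
  wlog hij : i < j generalizing i j t t'
  · rcases (not_lt.mp hij).lt_or_eq with hji | hji
    · exact (this hj hi ht' ht h.symm hji).symm
    · exact hji.symm
  have hiL : i < L.length := by omega
  have hhead : t.head? = some L[i] := by
    have := congrArg (fun l => (l.drop i).head?) h
    simpa [List.drop_append, List.head?_drop, hi, List.getElem?_take, hij,
      List.getElem?_eq_getElem hiL] using this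
  exact (ht _ hhead (List.getElem_mem _)).elim

theorem List.exists_eq_take_append {α : Type*} (L c : List α) :
    ∃ K ≤ L.length, ∃ t, c = L.take K ++ t ∧
      ∀ e, t.head? = some e → L[K]? ≠ some e := by
  induction L generalizing c with
  | nil => exact ⟨0, le_rfl, c, rfl, by simp⟩
  | cons a L ih =>
    match c with
    | [] => exact ⟨0, Nat.zero_le _, [], rfl, by simp⟩
    | b :: c =>
      by_cases hba : b = a
      · obtain ⟨K, hK, t, rfl, ht⟩ := ih c
        exact ⟨K + 1, by simpa using hK, t, by simp [hba], by simpa using ht⟩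
      · exact ⟨0, Nat.zero_le _, b :: c, rfl, by simp [Ne.symm hba]⟩

namespace DGraph

variable {G : DGraph}

theorem walkEnd_append (v : G.V) (l₁ l₂ : List G.E) :
    G.walkEnd v (l₁ ++ l₂) = G.walkEnd (G.walkEnd v l₁) l₂ := by
  induction l₁ generalizing v with
  | nil => rfl
  | cons e l ih => exact ih _

theorem IsWalk.take {v : G.V} {l : List G.E} (h : G.IsWalk v l) (k : ℕ) :
    G.IsWalk v (l.take k) := by
  rw [← List.take_append_drop k l, G.isWalk_append] at h
  exact h.1

theorem IsWalk.src_getElem {v : G.V} {l : List G.E} (h : G.IsWalk v l) (k : ℕ)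
    (hk : k < l.length) : G.src l[k] = G.walkEnd v (l.take k) := by
  induction l generalizing v k with
  | nil => simp at hk
  | cons e l ih =>
    cases k with
    | zero => exact h.1
    | succ k => exact ih h.2 k (by simpa using hk)

theorem IsWalk.src_of_head? {v : G.V} {l : List G.E} (h : G.IsWalk v l) {e : G.E}
    (he : l.head? = some e) : G.src e = v := by
  obtain ⟨l', rfl⟩ := List.head?_eq_some_iff.mp he
  exact h.1

theorem IsWalk.flatten_replicate {v : G.V} {l : List G.E} (h : G.IsWalk v l)
    (hclosed : G.walkEnd v l = v) (m : ℕ) : G.IsWalk v (List.replicate m l).flatten := by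
  induction m with
  | zero => trivial
  | succ m ih =>
    rw [List.replicate_succ, List.flatten_cons, G.isWalk_append, hclosed]
    exact ⟨h, ih⟩

theorem cons_map_tgt_eq_ofFn (v : G.V) (l : List G.E) :
    v :: l.map G.tgt = List.ofFn fun k : Fin (l.length + 1) => G.walkEnd v (l.take k) := by
  induction l generalizing v with
  | nil => rfl
  | cons e l ih =>
    rw [List.ofFn_succ, List.map_cons, ih]
    simp

def pathsFrom (G : DGraph) (v : G.V) : Set G.DPath := {c | c.first = v}

theorem pathsFrom_infinite_of_isWalk_closed {v : G.V} {p l : List G.E} (hp : G.IsWalk v p)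
    (hl : G.IsWalk (G.walkEnd v p) l) (hclosed : G.walkEnd (G.walkEnd v p) l = G.walkEnd v p)
    (hne : l ≠ []) : (G.pathsFrom v).Infinite := by
  let pump (m : ℕ) : G.DPath :=
    ⟨v, p ++ (List.replicate m l).flatten,
      (G.isWalk_append _ _ _).2 ⟨hp, hl.flatten_replicate hclosed m⟩⟩
  refine Set.infinite_of_injective_forall_mem (f := pump) (fun m m' h => ?_) (fun _ => rfl)
  have hlen := congrArg (fun c : G.DPath => c.edges.length) h
  simpa [pump, hne] using hlen

namespace DPath

@[ext] theorem ext {p q : G.DPath} (h₁ : p.first = q.first) (h₂ : p.edges = q.edges) :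
    p = q := by
  cases p; cases q
  cases h₁; cases h₂
  rfl

theorem IsSuffixOf.refl (p : G.DPath) : p.IsSuffixOf p := ⟨[], rfl, rfl⟩

theorem IsSuffixOf.total {a b w : G.DPath} (ha : a.IsSuffixOf w) (hb : b.IsSuffixOf w) :
    a.IsSuffixOf b ∨ b.IsSuffixOf a := by
  obtain ⟨la, hwa, hfa⟩ := ha
  obtain ⟨lb, hwb, hfb⟩ := hb
  rcases List.suffix_or_suffix_of_suffix ⟨la, hwa.symm⟩ ⟨lb, hwb.symm⟩ with
    ⟨m, hm⟩ | ⟨m, hm⟩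
  · have hl : la = lb ++ m :=
      List.append_cancel_right (by rw [← hwa, hwb, ← hm, List.append_assoc])
    exact .inl ⟨m, hm.symm, by rw [hfa, hl, walkEnd_append, ← hfb]⟩
  · have hl : lb = la ++ m :=
      List.append_cancel_right (by rw [← hwb, hwa, ← hm, List.append_assoc])
    exact .inr ⟨m, hm.symm, by rw [hfb, hl, walkEnd_append, ← hfa]⟩

def take (p : G.DPath) (k : ℕ) : G.DPath := ⟨p.first, p.edges.take k, p.wf.take k⟩

theorem vertexList_eq_ofFn (p : G.DPath) :
    p.vertexList = List.ofFn fun k : Fin (p.edges.length + 1) => (p.take k).last :=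
  G.cons_map_tgt_eq_ofFn p.first p.edges

theorem vertexList_nodup_of_finite (w : G.DPath) (hfin : (G.pathsFrom w.first).Finite) :
    w.vertexList.Nodup := by
  rw [vertexList_eq_ofFn, List.nodup_ofFn]
  by_contra hinj
  obtain ⟨i, j, hij, hne⟩ := Function.not_injective_iff.mp hinj
  wlog hlt : i < j generalizing i j
  · exact this j i hij.symm (Ne.symm hne) (lt_of_le_of_ne (not_lt.mp hlt) (Ne.symm hne))
  have hsplit : w.edges.take j = w.edges.take i ++ (w.edges.take j).drop i := by
    conv_lhs => rw [← List.take_append_drop i (w.edges.take j), List.take_take,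
      min_eq_left (Fin.val_fin_le.mpr hlt.le)]
  have hwalk := w.wf.take j
  rw [hsplit, G.isWalk_append] at hwalk
  refine hfin.not_infinite (pathsFrom_infinite_of_isWalk_closed hwalk.1 hwalk.2 ?_ ?_)
  · change _ = (w.take i).last
    rw [hij, ← walkEnd_append, ← hsplit]
    rfl
  · rw [← List.length_pos_iff, List.length_drop, List.length_take]
    omega

/-- Follow `w` for `k` steps, then leave it along `t`. -/
def branchOff (w : G.DPath) (x : Σ k : Fin (w.edges.length + 1), Npaths G (w.take k).last w) :
    G.pathsFrom w.first :=
  ⟨G.concatPath (w.take x.1) x.2.1 x.2.2.1, rfl⟩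

theorem branchOff_injective (w : G.DPath) : Function.Injective w.branchOff := by
  rintro ⟨i, t, ht⟩ ⟨j, t', ht'⟩ h
  have hedges : w.edges.take i ++ t.edges = w.edges.take j ++ t'.edges :=
    congrArg (fun c : G.pathsFrom w.first => c.1.edges) h
  obtain rfl : i = j := Fin.ext <| List.eq_of_take_append_eq_take_append
    (Nat.lt_succ_iff.mp i.isLt) (Nat.lt_succ_iff.mp j.isLt) ht.2 ht'.2 hedges
  obtain rfl : t = t' := ext (ht.1.trans ht'.1.symm) (List.append_cancel_left hedges)
  rfl

theorem branchOff_surjective (w : G.DPath) (hnodup : w.vertexList.Nodup) :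
    Function.Surjective w.branchOff := by
  rintro ⟨c, hc⟩
  have hvertex : Function.Injective fun k : Fin (w.edges.length + 1) => (w.take k).last := by
    rwa [vertexList_eq_ofFn, List.nodup_ofFn] at hnodup
  obtain ⟨K, hK, t, hct, hbranch⟩ := w.edges.exists_eq_take_append c.edges
  have hwalk := c.wf
  rw [hct, G.isWalk_append, hc] at hwalk
  refine ⟨⟨⟨K, Nat.lt_succ_of_le hK⟩, ⟨_, t, hwalk.2⟩, rfl, fun e he hew => ?_⟩,
    Subtype.ext (ext hc.symm hct.symm)⟩
  obtain ⟨j, hj, rfl⟩ := List.getElem_of_mem hew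
  have hjK : j = K := by
    have := @hvertex ⟨j, by omega⟩ ⟨K, by omega⟩ <|
      (w.wf.src_getElem j hj).symm.trans (hwalk.2.src_of_head? he)
    simpa using this
  subst hjK
  exact hbranch _ he (List.getElem?_eq_getElem hj)

theorem ncard_pathsFrom_eq_sum [DecidableEq G.V] (w : G.DPath) (hnodup : w.vertexList.Nodup)
    (hfin : (G.pathsFrom w.first).Finite) :
    (G.pathsFrom w.first).ncard = ∑ v ∈ w.vertexList.toFinset, (Npaths G v w).ncard := by
  have hbij : Function.Bijective w.branchOff :=
    ⟨w.branchOff_injective, w.branchOff_surjective hnodup⟩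
  have := hfin.to_subtype
  have (k : Fin (w.edges.length + 1)) : Finite (Npaths G (w.take k).last w) :=
    Finite.of_injective (fun t => w.branchOff ⟨k, t⟩) fun _ _ h => by simpa using hbij.1 h
  rw [← Nat.card_coe_set_eq, ← Nat.card_congr (Equiv.ofBijective _ hbij), Nat.card_sigma,
    List.sum_toFinset _ hnodup, vertexList_eq_ofFn, List.map_ofFn, List.sum_ofFn]
  rfl

end DPath

end DGraph

namespace GIS

open DGraph

variable {G : DGraph}

theorem exists_pair_mul_pair_of_isSuffixOf {t u v z : G.DPath} (htu : t.first = u.first)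
    (hvz : v.first = z.first) {l : List G.E} (hu : u.edges = l ++ v.edges)
    (hv : v.first = G.walkEnd u.first l) :
    ∃ (c : G.DPath) (htc : t.first = c.first), c.edges = l ++ z.edges ∧
      pair t u htu * pair v z hvz = pair t c htc := by
  change ∃ c htc, _ ∧ GIS.mul _ _ = _
  rw [GIS.mul, dif_pos ⟨l, hu, hv⟩]
  refine ⟨_, _, ?_, rfl⟩
  simp [hu]

theorem exists_pair_mul_pair_of_isSuffixOf' {t u v z : G.DPath} (htu : t.first = u.first)
    (hvz : v.first = z.first) (hvu : ¬ v.IsSuffixOf u) {l : List G.E}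
    (hv : v.edges = l ++ u.edges) (hu : u.first = G.walkEnd v.first l) :
    ∃ (c : G.DPath) (hcz : c.first = z.first), c.edges = l ++ t.edges ∧
      pair t u htu * pair v z hvz = pair c z hcz := by
  change ∃ c hcz, _ ∧ GIS.mul _ _ = _
  rw [GIS.mul, dif_neg hvu, dif_pos ⟨l, hv, hu⟩]
  refine ⟨_, _, ?_, rfl⟩
  simp [hv]

theorem pair_mul_pair_of_isSuffixOf {t u v z c : G.DPath} (htu : t.first = u.first)
    (hvz : v.first = z.first) {l : List G.E} (hu : u.edges = l ++ v.edges)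
    (hv : v.first = G.walkEnd u.first l) (htc : t.first = c.first) (hc : c.edges = l ++ z.edges) :
    pair t u htu * pair v z hvz = pair t c htc := by
  obtain ⟨c', htc', hc', he⟩ := exists_pair_mul_pair_of_isSuffixOf htu hvz hu hv
  rw [he, pair.injEq]
  exact ⟨rfl, DPath.ext (htc'.symm.trans htc) (hc'.trans hc.symm)⟩

theorem pair_mul_pair_of_isSuffixOf' {t u v z c : G.DPath} (htu : t.first = u.first)
    (hvz : v.first = z.first) (hvu : ¬ v.IsSuffixOf u) {l : List G.E}
    (hv : v.edges = l ++ u.edges) (hu : u.first = G.walkEnd v.first l) (hcz : c.first = z.first)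
    (hc : c.edges = l ++ t.edges) :
    pair t u htu * pair v z hvz = pair c z hcz := by
  obtain ⟨c', hcz', hc', he⟩ := exists_pair_mul_pair_of_isSuffixOf' htu hvz hvu hv hu
  rw [he, pair.injEq]
  exact ⟨DPath.ext (hcz'.trans hcz.symm) (hc'.trans hc.symm), rfl⟩

theorem pair_mul_pair_of_not_isSuffixOf {t u v z : G.DPath} (htu : t.first = u.first)
    (hvz : v.first = z.first) (hvu : ¬ v.IsSuffixOf u) (huv : ¬ u.IsSuffixOf v) :
    pair t u htu * pair v z hvz = zero := by
  change GIS.mul _ _ = _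
  rw [GIS.mul, dif_neg hvu, dif_neg huv]

theorem pair_mul_self (q : G.DPath) : pair q q rfl * pair q q rfl = pair q q rfl :=
  pair_mul_pair_of_isSuffixOf rfl rfl (l := []) rfl rfl rfl rfl

theorem pair_mul_inv (a b : G.DPath) (h : a.first = b.first) :
    pair a b h * (pair a b h).inv = pair a a rfl :=
  pair_mul_pair_of_isSuffixOf h h.symm (l := []) rfl rfl rfl rfl

theorem eq_of_pair_mul_self {q r : G.DPath} {h : q.first = r.first}
    (he : pair q r h * pair q r h = pair q r h) : q = r := by
  by_cases hqr : q.IsSuffixOf r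
  · obtain ⟨l, hr, hq⟩ := hqr
    obtain ⟨c, _, hc, hprod⟩ := exists_pair_mul_pair_of_isSuffixOf h h hr hq
    rw [hprod, pair.injEq] at he
    have hl : l = [] := by
      simpa [hr, hc] using congrArg (fun p : G.DPath => p.edges.length) he.2
    exact DPath.ext h (by simp [hr, hl])
  · by_cases hrq : r.IsSuffixOf q
    · obtain ⟨l, hq, hr⟩ := hrq
      obtain ⟨c, _, hc, hprod⟩ := exists_pair_mul_pair_of_isSuffixOf' h h hqr hq hr
      rw [hprod, pair.injEq] at he
      have hl : l = [] := by
        simpa [hq, hc] using congrArg (fun p : G.DPath => p.edges.length) he.1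
      exact DPath.ext h (by simp [hq, hl])
    · rw [pair_mul_pair_of_not_isSuffixOf h h hqr hrq] at he
      cases he

theorem le_pair_iff {a b : G.DPath} {h : a.first = b.first} {s : GIS G} :
    GIS.le (pair a b h) s ↔
      ∃ (c d : G.DPath) (hcd : c.first = d.first) (l : List G.E), s = pair c d hcd ∧
        a.edges = l ++ c.edges ∧ b.edges = l ++ d.edges ∧ c.first = G.walkEnd a.first l := by
  constructor
  · rintro ⟨_ | ⟨q, r, hqr⟩, he, hs⟩
    · cases hs
    obtain rfl := eq_of_pair_mul_self he
    rcases s with _ | ⟨c, d, hcd⟩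
    · cases hs
    by_cases hcq : c.IsSuffixOf q
    · obtain ⟨l, hq, hc⟩ := hcq
      obtain ⟨d', _, hd', hprod⟩ := exists_pair_mul_pair_of_isSuffixOf hqr hcd hq hc
      rw [hprod, pair.injEq] at hs
      obtain ⟨rfl, rfl⟩ := hs
      exact ⟨c, d, hcd, l, rfl, hq, hd', hc⟩
    · by_cases hqc : q.IsSuffixOf c
      · obtain ⟨l, hc, hq⟩ := hqc
        rw [pair_mul_pair_of_isSuffixOf' hqr hcd hcq hc hq hcd hc, pair.injEq] at hs
        obtain ⟨rfl, rfl⟩ := hs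
        exact ⟨a, b, h, [], rfl, rfl, rfl, rfl⟩
      · rw [pair_mul_pair_of_not_isSuffixOf hqr hcd hcq hqc] at hs
        cases hs
  · rintro ⟨c, d, hcd, l, rfl, ha, hb, hc⟩
    exact ⟨pair a a rfl, pair_mul_self a,
      (pair_mul_pair_of_isSuffixOf rfl hcd ha hc h hb).symm⟩

theorem pair_le_of_pair_le_of_prepend {a b a' b' : G.DPath} {h : a.first = b.first}
    {h' : a'.first = b'.first} {s : GIS G} (p : List G.E) (ha : a'.edges = p ++ a.edges)
    (hb : b'.edges = p ++ b.edges) (hf : a.first = G.walkEnd a'.first p)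
    (hle : GIS.le (pair a b h) s) :
    GIS.le (pair a' b' h') s := by
  obtain ⟨c, d, hcd, l, rfl, hac, hbd, hc⟩ := le_pair_iff.mp hle
  refine le_pair_iff.mpr ⟨c, d, hcd, p ++ l, rfl, ?_, ?_, ?_⟩
  · rw [ha, hac, List.append_assoc]
  · rw [hb, hbd, List.append_assoc]
  · rw [walkEnd_append, ← hf, hc]

end GIS

section ChainCosets

open DGraph GIS

variable {G : DGraph}

def chainCoset (w c : G.DPath) : Set (GIS G) :=
  {s | ∃ h : w.first = c.first, GIS.le (pair w c h) s}

theorem coset_chainSet_eq {w a b c : G.DPath} (hab : a.first = b.first) {l : List G.E}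
    (hw : w.edges = l ++ a.edges) (ha : a.first = G.walkEnd w.first l) (hwc : w.first = c.first)
    (hc : c.edges = l ++ b.edges) :
    {s | ∃ x ∈ chainSet G w, GIS.le (x * pair a b hab) s} = chainCoset w c := by
  ext s
  constructor
  · rintro ⟨_, ⟨q, ⟨m, hwq, hq⟩, rfl⟩, hle⟩
    refine ⟨hwc, ?_⟩
    by_cases haq : a.IsSuffixOf q
    · obtain ⟨l', hqa, ha'⟩ := haq
      obtain ⟨d, _, hd, hprod⟩ := exists_pair_mul_pair_of_isSuffixOf rfl hab hqa ha'
      rw [hprod] at hle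
      have hl : l = m ++ l' :=
        List.append_cancel_right (by rw [← hw, hwq, hqa, List.append_assoc])
      exact pair_le_of_pair_le_of_prepend m hwq (by rw [hc, hd, hl, List.append_assoc]) hq hle
    · obtain ⟨l', haq', hq'⟩ :=
        (DPath.IsSuffixOf.total ⟨l, hw, ha⟩ ⟨m, hwq, hq⟩).resolve_left haq
      rw [pair_mul_pair_of_isSuffixOf' rfl hab haq haq' hq' hab haq'] at hle
      exact pair_le_of_pair_le_of_prepend l hw hc ha hle
  · rintro ⟨_, hle⟩
    refine ⟨pair w w rfl, ⟨w, .refl w, rfl⟩, ?_⟩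
    rwa [pair_mul_pair_of_isSuffixOf rfl hab hw ha hwc hc]

theorem cosets_chainSet_eq (w : G.DPath) :
    cosets G (chainSet G w) = chainCoset w '' G.pathsFrom w.first := by
  ext C
  constructor
  · rintro ⟨_ | ⟨a, b, hab⟩, ht, rfl⟩
    · obtain ⟨q, _, hq⟩ := ht
      cases hq
    rw [pair_mul_inv] at ht
    obtain ⟨q, ⟨l, hw, ha⟩, hq⟩ := ht
    obtain ⟨rfl, -⟩ := (pair.injEq _ _ _ _ _ _).mp hq
    let c : G.DPath := ⟨w.first, _, G.isWalk_chopAppend ⟨l, hw, ha⟩ hab⟩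
    exact ⟨c, rfl, (coset_chainSet_eq (c := c) hab hw ha rfl (by simp [c, hw])).symm⟩
  · rintro ⟨c, hc, rfl⟩
    refine ⟨pair w c hc.symm, ?_,
      (coset_chainSet_eq hc.symm (l := []) rfl rfl hc.symm rfl).symm⟩
    rw [pair_mul_inv]
    exact ⟨w, .refl w, rfl⟩

theorem chainCoset_injOn (w : G.DPath) : Set.InjOn (chainCoset w) (G.pathsFrom w.first) := by
  intro c₁ hc₁ c₂ hc₂ h
  have hmem : pair w c₁ hc₁.symm ∈ chainCoset w c₂ :=
    h ▸ ⟨hc₁.symm, le_pair_iff.mpr ⟨w, c₁, hc₁.symm, [], rfl, rfl, rfl, rfl⟩⟩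
  obtain ⟨_, hle⟩ := hmem
  obtain ⟨_, _, _, l, hs, hw, hc, _⟩ := le_pair_iff.mp hle
  obtain ⟨rfl, rfl⟩ := (pair.injEq _ _ _ _ _ _).mp hs
  have hl : l = [] := by simpa using congrArg List.length hw
  exact (DPath.ext (hc₂.trans hc₁.symm) (by simpa [hl] using hc)).symm

end ChainCosets

theorem stmt_15_general (G : DGraph) [DecidableEq G.V]
    (w : G.DPath) (hfin : (cosets G (chainSet G w)).Finite) :
    (cosets G (chainSet G w)).ncard =
      ∑ v ∈ w.vertexList.toFinset, (Npaths G v w).ncard := by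
  rw [cosets_chainSet_eq] at hfin ⊢
  have hpaths := hfin.of_finite_image (chainCoset_injOn w)
  rw [(chainCoset_injOn w).ncard_image,
    w.ncard_pathsFrom_eq_sum (w.vertexList_nodup_of_finite hpaths) hpaths]

/-- if `L = ↑{(w,w)}` has finite index in `S(Γ)`, then the index is
the sum, over the vertices `v` of `w`, of the number of paths starting at `v` whose
first edge is not an edge of `w`. -/
theorem stmt_15 (G : DGraph) [Fintype G.V] [Fintype G.E] [DecidableEq G.V]
    (w : G.DPath) (hfin : (cosets G (chainSet G w)).Finite) :
    (cosets G (chainSet G w)).ncard =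
      ∑ v ∈ w.vertexList.toFinset, (Npaths G v w).ncard :=
  stmt_15_general G w hfin
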